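/- The function ψ(t) := δ_γ|t| − h_{q,γ}(t)^q is differentiable at every point of ℝ, and its derivative at t equals j(t) for every real t. -/

import Mathlib

/-- The Huber-like local smoothing `h_{q,γ}` of the absolute value, with
parameters `q ∈ (0,1)` and `γ > 0`.  Powers are real powers. -/
noncomputable def huber (q γ t : ℝ) : ℝ :=
  if |t| ≤ 1 / γ then q * γ ^ ((1 - q) / q) * |t| ^ (1 / q)
  else |t| - (1 - q) / γ

/-- The superposition function `j` from the first-order optimality system, with
`δ_γ = q^q γ^(1-q)`. -/
noncomputable def jfun (q γ t : ℝ) : ℝ :=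
  if 1 / γ < |t| then
    (q ^ q * γ ^ (1 - q) - q * (|t| + (q - 1) / γ) ^ (q - 1)) * Real.sign t
  else 0

/-!
Write `ψ(s) = Ψ(|s|)`, where the profile `Ψ` vanishes on `[0, 1/γ]` and equals
`δ_γ x - (x + (q - 1)/γ)^q` beyond. The constant `δ_γ = q^q γ^(1-q)` is exactly the one for which
both the value and the slope of the outer branch vanish at `x = 1/γ`, so `Ψ` is differentiable
everywhere; since `Ψ` is flat at `0`, the chain rule through `|·|` also holds at the kink `s = 0`.
-/

open Set

theorem HasDerivAt.comp_abs {g : ℝ → ℝ} {d t : ℝ} (hg : HasDerivAt g d |t|)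
    (h0 : t = 0 → d = 0) : HasDerivAt (fun s => g |s|) (d * Real.sign t) t := by
  rcases lt_trichotomy t 0 with ht | rfl | ht
  · rw [Real.sign_of_neg ht]
    exact hg.comp t (hasDerivAt_abs_neg ht)
  · rw [h0 rfl, zero_mul]
    rw [h0 rfl, abs_zero, hasDerivAt_iff_isLittleO_nhds_zero] at hg
    have := hg.comp_tendsto (continuous_abs.tendsto' 0 0 abs_zero)
    rw [hasDerivAt_iff_isLittleO_nhds_zero]
    simpa [Function.comp_def] using Asymptotics.isLittleO_abs_right.mp this
  · rw [Real.sign_of_pos ht]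
    exact hg.comp t (hasDerivAt_abs_pos ht)

theorem hasDerivAt_ite_le {f g f' g' : ℝ → ℝ} {a : ℝ}
    (hf : ∀ y ≤ a, HasDerivAt f (f' y) y) (hg : ∀ y, a ≤ y → HasDerivAt g (g' y) y)
    (hfg : f a = g a) (hfg' : f' a = g' a) (x : ℝ) :
    HasDerivAt (fun y => if y ≤ a then f y else g y) (if x ≤ a then f' x else g' x) x := by
  rcases lt_trichotomy x a with hx | rfl | hx
  · rw [if_pos hx.le]
    refine (hf x hx.le).congr_of_eventuallyEq ?_
    filter_upwards [eventually_lt_nhds hx] with y hy using if_pos hy.le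
  · rw [if_pos le_rfl]
    have hIic : HasDerivWithinAt (fun y => if y ≤ x then f y else g y) (f' x) (Iic x) x :=
      (hf x le_rfl).hasDerivWithinAt.congr (fun y hy => if_pos hy) (if_pos le_rfl)
    have hIci : HasDerivWithinAt (fun y => if y ≤ x then f y else g y) (f' x) (Ici x) x := by
      rw [hfg']
      refine (hg x le_rfl).hasDerivWithinAt.congr (fun y hy => ?_) (by rw [if_pos le_rfl, hfg])
      rcases (mem_Ici.mp hy).eq_or_lt with rfl | hlt
      · rw [if_pos le_rfl, hfg]
      · exact if_neg hlt.not_ge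
    simpa using (hIic.union hIci).hasDerivAt (by simp)
  · rw [if_neg hx.not_ge]
    refine (hg x hx.le).congr_of_eventuallyEq ?_
    filter_upwards [eventually_gt_nhds hx] with y hy using if_neg hy.not_ge

theorem div_rpow_self (q γ : ℝ) (hq0 : 0 < q) (hγ : 0 < γ) :
    (q / γ) ^ q = q ^ q * γ ^ (1 - q) / γ := by
  rw [Real.div_rpow hq0.le hγ.le, Real.rpow_sub hγ, Real.rpow_one]
  field_simp

theorem mul_div_rpow_sub_one (q γ : ℝ) (hq0 : 0 < q) (hγ : 0 < γ) :
    q * (q / γ) ^ (q - 1) = q ^ q * γ ^ (1 - q) := by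
  rw [Real.rpow_sub_one (by positivity), div_rpow_self q γ hq0 hγ]
  field_simp

theorem huber_rpow_of_abs_le {q γ t : ℝ} (hq0 : 0 < q) (hγ : 0 < γ) (ht : |t| ≤ 1 / γ) :
    huber q γ t ^ q = q ^ q * γ ^ (1 - q) * |t| := by
  rw [huber, if_pos ht, Real.mul_rpow (by positivity) (by positivity),
    Real.mul_rpow hq0.le (by positivity), ← Real.rpow_mul hγ.le, ← Real.rpow_mul (abs_nonneg t),
    div_mul_cancel₀ _ hq0.ne', one_div_mul_cancel hq0.ne', Real.rpow_one]

noncomputable def psiProfile (q γ x : ℝ) : ℝ :=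
  if x ≤ 1 / γ then 0 else q ^ q * γ ^ (1 - q) * x - (x + (q - 1) / γ) ^ q

theorem psi_eq_psiProfile_abs {q γ : ℝ} (hq0 : 0 < q) (hγ : 0 < γ) (s : ℝ) :
    q ^ q * γ ^ (1 - q) * |s| - huber q γ s ^ q = psiProfile q γ |s| := by
  by_cases hs : |s| ≤ 1 / γ
  · rw [psiProfile, if_pos hs, huber_rpow_of_abs_le hq0 hγ hs, sub_self]
  · rw [psiProfile, if_neg hs, huber, if_neg hs]
    ring_nf

theorem hasDerivAt_psiProfile {q γ : ℝ} (hq0 : 0 < q) (hγ : 0 < γ) (x : ℝ) :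
    HasDerivAt (psiProfile q γ)
      (if x ≤ 1 / γ then 0 else q ^ q * γ ^ (1 - q) - q * (x + (q - 1) / γ) ^ (q - 1)) x := by
  have hc : 1 / γ + (q - 1) / γ = q / γ := by ring
  refine hasDerivAt_ite_le (f' := fun _ => 0)
    (g' := fun y => q ^ q * γ ^ (1 - q) - q * (y + (q - 1) / γ) ^ (q - 1))
    (fun y _ => hasDerivAt_const y 0) (fun y hy => ?_) ?_ ?_ x
  · have hpos : 0 < y + (q - 1) / γ := by
      have : 0 < q / γ := by positivity
      linarith
    simpa only [mul_one, one_mul] using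
      ((hasDerivAt_id' y).const_mul (q ^ q * γ ^ (1 - q))).fun_sub
        (((hasDerivAt_id' y).add_const ((q - 1) / γ)).rpow_const (p := q) (Or.inl hpos.ne'))
  · rw [hc, div_rpow_self q γ hq0 hγ]
    ring
  · rw [hc, mul_div_rpow_sub_one q γ hq0 hγ, sub_self]

theorem psi_hasDerivAt_general (q γ : ℝ) (hq0 : 0 < q) (hγ : 0 < γ) :
    ∀ t : ℝ,
      HasDerivAt (fun s : ℝ => q ^ q * γ ^ (1 - q) * |s| - (huber q γ s) ^ q)
        (jfun q γ t) t := by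
  intro t
  have hj : jfun q γ t = (if |t| ≤ 1 / γ then 0
      else q ^ q * γ ^ (1 - q) - q * (|t| + (q - 1) / γ) ^ (q - 1)) * Real.sign t := by
    by_cases ht : |t| ≤ 1 / γ
    · rw [jfun, if_neg ht.not_gt, if_pos ht, zero_mul]
    · rw [jfun, if_pos (not_le.mp ht), if_neg ht]
  rw [funext (psi_eq_psiProfile_abs hq0 hγ), hj]
  exact (hasDerivAt_psiProfile hq0 hγ |t|).comp_abs fun ht => by simp [ht, hγ.le]

/-- The function `ψ(t) = δ_γ |t| − h_{q,γ}(t)^q` is differentiable at every point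
of `ℝ` and its derivative at `t` equals `j(t)` for every real `t`. -/
theorem psi_hasDerivAt (q γ : ℝ) (hq0 : 0 < q) (hq1 : q < 1) (hγ : 0 < γ) :
    ∀ t : ℝ,
      HasDerivAt (fun s : ℝ => q ^ q * γ ^ (1 - q) * |s| - (huber q γ s) ^ q)
        (jfun q γ t) t :=
  psi_hasDerivAt_general q γ hq0 hγ
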